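/- For every real k ≥ 4 there exists a constant C_k > 0 such that for all v, v* ∈ ℝ³ and all σ ∈ S²: (i) |⟨v'⟩^k − sin^k(θ/2) ⟨v*⟩^k| ≤ C_k sin²(θ/2) ⟨v*⟩^{k−1} ⟨v⟩ + C_k ⟨v⟩^k, and (ii) |⟨v'⟩^k − cos^k(θ/2) ⟨v⟩^k| ≤ C_k ⟨v*⟩^k ⟨v⟩^{k−1}. -/

import Mathlib

open MeasureTheory Real
open scoped ENNReal RealInnerProductSpace Classical

noncomputable section

/-- velocity space ℝ³ -/
abbrev E3 : Type := EuclideanSpace ℝ (Fin 3)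

/-- the unit sphere 𝕊² ⊆ ℝ³ -/
abbrev S2 : Type := Metric.sphere (0 : E3) 1

/-- surface measure on the unit sphere -/
noncomputable instance : MeasureSpace S2 := ⟨(volume : Measure E3).toSphere⟩

/-- Japanese bracket ⟨v⟩ = √(1+|v|²). -/
def jap (v : E3) : ℝ := Real.sqrt (1 + ‖v‖ ^ 2)

/-- Post-collision velocity v' = (v+v*)/2 + (|v-v*|/2)σ. -/
def vP (v w : E3) (σ : S2) : E3 := (2⁻¹ : ℝ) • (v + w) + (‖v - w‖ / 2) • (σ : E3)

/-- Post-collision velocity v*' = (v+v*)/2 - (|v-v*|/2)σ. -/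
def vsP (v w : E3) (σ : S2) : E3 := (2⁻¹ : ℝ) • (v + w) - (‖v - w‖ / 2) • (σ : E3)

/-- cos θ = ((v-v*)/|v-v*|)·σ. -/
def cosTheta (v w : E3) (σ : S2) : ℝ := ⟪v - w, (σ : E3)⟫ / ‖v - w‖

/-- sin(θ/2) = √((1-cos θ)/2). -/
def sinHalf (v w : E3) (σ : S2) : ℝ := Real.sqrt ((1 - cosTheta v w σ) / 2)

/-- cos(θ/2) = √((1+cos θ)/2). -/
def cosHalf (v w : E3) (σ : S2) : ℝ := Real.sqrt ((1 + cosTheta v w σ) / 2)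

/-- a fixed reference unit direction, used to express rotation-invariant angular integrals -/
def e1 : E3 := EuclideanSpace.single 0 1

/-- cos θ for the deviation angle of σ relative to the fixed direction `e1` -/
def cos1 (σ : S2) : ℝ := ⟪e1, (σ : E3)⟫

def sinHalf1 (σ : S2) : ℝ := Real.sqrt ((1 - cos1 σ) / 2)

def cosHalf1 (σ : S2) : ℝ := Real.sqrt ((1 + cos1 σ) / 2)

/-- the standard Maxwellian μ(v) = (2π)^{-3/2} e^{-|v|²/2} -/
def maxw (v : E3) : ℝ := (2 * π) ^ (-(3 : ℝ) / 2) * Real.exp (-‖v‖ ^ 2 / 2)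

/-- Grad's angular cutoff assumption (A2): `bf` is measurable, nonnegative,
`K ≤ bf ≤ K⁻¹` on `[0,1]` for some `K > 0`, and `bf` vanishes on negatives. -/
def gradCutoff (bf : ℝ → ℝ) : Prop :=
  Measurable bf ∧ (∀ t, 0 ≤ bf t) ∧
    (∃ K : ℝ, 0 < K ∧ ∀ t ∈ Set.Icc (0 : ℝ) 1, K ≤ bf t ∧ bf t ≤ K⁻¹) ∧
    ∀ t : ℝ, t < 0 → bf t = 0

/-- gain operator Q⁺ -/
def Qgain (γ : ℝ) (bf : ℝ → ℝ) (f g : E3 → ℝ) (v : E3) : ℝ :=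
  ∫ w : E3, ∫ σ : S2, ‖v - w‖ ^ γ * bf (cosTheta v w σ) * (f (vsP v w σ) * g (vP v w σ))

/-- loss operator Q⁻ -/
def Qloss (γ : ℝ) (bf : ℝ → ℝ) (f g : E3 → ℝ) (v : E3) : ℝ :=
  ∫ w : E3, ∫ σ : S2, ‖v - w‖ ^ γ * bf (cosTheta v w σ) * (f w * g v)

/-- the Boltzmann collision operator Q = Q⁺ - Q⁻ -/
def Qcol (γ : ℝ) (bf : ℝ → ℝ) (f g : E3 → ℝ) (v : E3) : ℝ :=
  ∫ w : E3, ∫ σ : S2, ‖v - w‖ ^ γ * bf (cosTheta v w σ) *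
    (f (vsP v w σ) * g (vP v w σ) - f w * g v)

/-- collision frequency ν(v) -/
def nuF (γ : ℝ) (bf : ℝ → ℝ) (v : E3) : ℝ :=
  ∫ w : E3, ∫ σ : S2, ‖v - w‖ ^ γ * bf (cosTheta v w σ) * maxw w

/-- squared weighted norm ‖f‖²_{L²_q} -/
def wSqR (q : ℝ) (f : E3 → ℝ) : ℝ := ∫ v : E3, f v ^ 2 * jap v ^ (2 * q)

/-- weighted norm ‖f‖_{L²_q} -/
def wNorm (q : ℝ) (f : E3 → ℝ) : ℝ := Real.sqrt (wSqR q f)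

/-- squared star norm ‖f‖²_{L²_{k+γ/2,*}} = ∫∫ μ(v*)|v-v*|^γ f(v)² ⟨v⟩^{2k} -/
def starSq (γ k : ℝ) (f : E3 → ℝ) : ℝ :=
  ∫ v : E3, ∫ w : E3, maxw w * ‖v - w‖ ^ γ * f v ^ 2 * jap v ^ (2 * k)

/-- star norm ‖f‖_{L²_{k+γ/2,*}} -/
def starNorm (γ k : ℝ) (f : E3 → ℝ) : ℝ := Real.sqrt (starSq γ k f)

/-- squared exponentially weighted norm ‖f‖²_{L²_{q,a,b}} -/
def expSq (q a b : ℝ) (f : E3 → ℝ) : ℝ :=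
  ∫ v : E3, f v ^ 2 * jap v ^ (2 * q) * Real.exp (2 * a * jap v ^ b)

/-- exponentially weighted norm ‖f‖_{L²_{q,a,b}} -/
def expNorm (q a b : ℝ) (f : E3 → ℝ) : ℝ := Real.sqrt (expSq q a b f)

/-! The post-collision velocity satisfies `|v' - v| = sin(θ/2) |v - v*|` and
`|v' - v*| = cos(θ/2) |v - v*|`. Since `⟨·⟩` is 1-Lipschitz and dominates the norm, this gives
`|⟨v'⟩ - sin(θ/2) ⟨v*⟩| ≤ 2⟨v⟩` and `|⟨v'⟩ - cos(θ/2) ⟨v⟩| ≤ 2⟨v*⟩`. Both estimates then follow from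
the mean value bound `|x^k - y^k| ≤ k (y + r)^(k-1) r` for `|x - y| ≤ r`; in (i) the factor
`sin^(k-1)(θ/2)` produced by the mean value bound is absorbed into `sin²(θ/2)`. -/

lemma rpow_sub_rpow_le_of_le {k x y : ℝ} (hk : 1 ≤ k) (hy : 0 ≤ y) (hyx : y ≤ x) :
    x ^ k - y ^ k ≤ k * x ^ (k - 1) * (x - y) := by
  rcases (hy.trans hyx).eq_or_lt with hx | hx
  · obtain rfl : y = 0 := le_antisymm (hx ▸ hyx) hy
    simp [← hx]
  obtain ⟨t, ht₀, rfl⟩ : ∃ t, 0 ≤ t ∧ y = t * x :=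
    ⟨y / x, div_nonneg hy hx.le, (div_mul_cancel₀ y hx.ne').symm⟩
  have hbernoulli : 1 + k * (t - 1) ≤ t ^ k := by
    simpa using one_add_mul_self_le_rpow_one_add (s := t - 1) (by linarith) hk
  have hxk : x ^ k = x ^ (k - 1) * x := by
    rw [← Real.rpow_add_one hx.ne', sub_add_cancel]
  rw [Real.mul_rpow ht₀ hx.le, hxk]
  have hxk₀ : 0 ≤ x ^ (k - 1) * x := by positivity
  nlinarith [mul_le_mul_of_nonneg_left hbernoulli hxk₀]

lemma abs_rpow_sub_rpow_le {k x y r : ℝ} (hk : 1 ≤ k) (hx : 0 ≤ x) (hy : 0 ≤ y)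
    (hxy : |x - y| ≤ r) : |x ^ k - y ^ k| ≤ k * (y + r) ^ (k - 1) * r := by
  have hk0 : 0 ≤ k - 1 := by linarith
  have hr : 0 ≤ r := (abs_nonneg _).trans hxy
  obtain ⟨hyx, hxy⟩ := abs_le.1 hxy
  rcases le_total y x with h | h
  · have hmono : x ^ (k - 1) ≤ (y + r) ^ (k - 1) := Real.rpow_le_rpow hx (by linarith) hk0
    rw [abs_of_nonneg (sub_nonneg.2 (Real.rpow_le_rpow hy h (by linarith)))]
    calc x ^ k - y ^ k ≤ k * x ^ (k - 1) * (x - y) := rpow_sub_rpow_le_of_le hk hy h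
      _ ≤ k * (y + r) ^ (k - 1) * r := by gcongr
  · have hmono : y ^ (k - 1) ≤ (y + r) ^ (k - 1) := Real.rpow_le_rpow hy (by linarith) hk0
    rw [abs_of_nonpos (sub_nonpos.2 (Real.rpow_le_rpow hx h (by linarith))), neg_sub]
    calc y ^ k - x ^ k ≤ k * y ^ (k - 1) * (y - x) := rpow_sub_rpow_le_of_le hk hx h
      _ ≤ k * (y + r) ^ (k - 1) * r := by gcongr; linarith

lemma add_rpow_le_two_rpow_mul {p q r : ℝ} (hp : 0 ≤ p) (hq : 0 ≤ q) (hr : 1 ≤ r) :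
    (p + q) ^ r ≤ 2 ^ (r - 1) * (p ^ r + q ^ r) := by
  exact_mod_cast NNReal.rpow_add_le_mul_rpow_add_rpow ⟨p, hp⟩ ⟨q, hq⟩ hr

lemma rpow_sub_one_mul_self {a k : ℝ} (ha : 0 ≤ a) (hk : k ≠ 0) : a ^ (k - 1) * a = a ^ k := by
  rw [← Real.rpow_add_one' ha (by simpa using hk), sub_add_cancel]

lemma abs_rpow_sub_mul_rpow_le_sq_mul_add_rpow {k s a b x : ℝ} (hk : 3 ≤ k) (hs₀ : 0 ≤ s)
    (hs₁ : s ≤ 1) (ha : 0 ≤ a) (hb : 0 ≤ b) (hx : 0 ≤ x) (h : |x - s * b| ≤ 2 * a) :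
    |x ^ k - s ^ k * b ^ k| ≤ k * 4 ^ k * s ^ 2 * b ^ (k - 1) * a + k * 4 ^ k * a ^ k := by
  set P : ℝ := 2 ^ (k - 2)
  have hP : 1 ≤ P := Real.one_le_rpow (by norm_num) (by linarith)
  have h2 : (2 : ℝ) ^ (k - 1) = 2 * P := by
    rw [show k - 1 = 1 + (k - 2) by ring, Real.rpow_add (by norm_num), Real.rpow_one]
  have h4 : (4 : ℝ) ^ k = 16 * P ^ 2 := by
    rw [show k = 2 + (k - 2) by ring, Real.rpow_add (by norm_num),
      show (4 : ℝ) ^ (k - 2) = (2 * 2) ^ (k - 2) by norm_num,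
      Real.mul_rpow (by norm_num) (by norm_num)]
    norm_num
    ring
  have hs : s ^ (k - 1) ≤ s ^ 2 := by
    rw [← Real.rpow_natCast]
    exact Real.rpow_le_rpow_of_exponent_ge' hs₀ hs₁ (by norm_num) (by push_cast; linarith)
  have hQ : 0 ≤ s ^ 2 * b ^ (k - 1) * a := by positivity
  have hR : s ^ (k - 1) * b ^ (k - 1) * a ≤ s ^ 2 * b ^ (k - 1) * a := by gcongr
  rw [← Real.mul_rpow hs₀ hb]
  calc |x ^ k - (s * b) ^ k| ≤ k * (s * b + 2 * a) ^ (k - 1) * (2 * a) :=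
        abs_rpow_sub_rpow_le (by linarith) hx (by positivity) h
    _ ≤ k * (P * ((s * b) ^ (k - 1) + (2 * a) ^ (k - 1))) * (2 * a) := by
        gcongr
        simpa [P, show k - 1 - 1 = k - 2 by ring] using
          add_rpow_le_two_rpow_mul (r := k - 1) (by positivity) (by positivity) (by linarith)
    _ = 2 * k * P * (s ^ (k - 1) * b ^ (k - 1) * a) + 4 * k * P ^ 2 * (a ^ (k - 1) * a) := by
        rw [Real.mul_rpow hs₀ hb, Real.mul_rpow (by norm_num) ha, h2]
        ring
    _ ≤ k * 4 ^ k * s ^ 2 * b ^ (k - 1) * a + k * 4 ^ k * a ^ k := by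
        rw [rpow_sub_one_mul_self ha (by linarith), h4]
        nlinarith [mul_le_mul_of_nonneg_left hR (by positivity : (0 : ℝ) ≤ 2 * k * P),
          mul_nonneg (mul_nonneg (by linarith : (0 : ℝ) ≤ k) hQ)
            (by nlinarith : (0 : ℝ) ≤ 16 * P ^ 2 - 2 * P),
          mul_nonneg (by linarith : (0 : ℝ) ≤ k) (Real.rpow_nonneg ha k), sq_nonneg P]

lemma abs_rpow_sub_mul_rpow_le_rpow_mul_rpow {k c a b x : ℝ} (hk : 1 ≤ k) (hc₀ : 0 ≤ c)
    (hc₁ : c ≤ 1) (ha : 1 ≤ a) (hb : 1 ≤ b) (hx : 0 ≤ x) (h : |x - c * a| ≤ 2 * b) :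
    |x ^ k - c ^ k * a ^ k| ≤ k * 4 ^ k * b ^ k * a ^ (k - 1) := by
  have hab : c * a + 2 * b ≤ 4 * (a * b) := by nlinarith
  rw [← Real.mul_rpow hc₀ (by linarith)]
  calc |x ^ k - (c * a) ^ k| ≤ k * (c * a + 2 * b) ^ (k - 1) * (2 * b) :=
        abs_rpow_sub_rpow_le hk hx (by positivity) h
    _ ≤ k * (4 * (a * b)) ^ (k - 1) * (2 * b) := by gcongr
    _ = k * (4 ^ (k - 1) * 4) * (b ^ (k - 1) * b) * a ^ (k - 1) / 2 := by
        rw [Real.mul_rpow (by norm_num) (by positivity),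
          Real.mul_rpow (by positivity) (by positivity)]
        ring
    _ ≤ k * 4 ^ k * b ^ k * a ^ (k - 1) := by
        rw [rpow_sub_one_mul_self (by norm_num) (by linarith),
          rpow_sub_one_mul_self (by positivity) (by linarith)]
        have : 0 ≤ k * 4 ^ k * b ^ k * a ^ (k - 1) := by positivity
        linarith

lemma jap_nonneg (v : E3) : 0 ≤ jap v := Real.sqrt_nonneg _

lemma one_le_jap (v : E3) : 1 ≤ jap v :=
  Real.one_le_sqrt.2 (by simp)

lemma norm_le_jap (v : E3) : ‖v‖ ≤ jap v :=
  Real.le_sqrt_of_sq_le (by linarith)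

lemma jap_sq (v : E3) : jap v ^ 2 = 1 + ‖v‖ ^ 2 := Real.sq_sqrt (by positivity)

lemma jap_le_jap_add_norm_sub (u z : E3) : jap u ≤ jap z + ‖u - z‖ := by
  have hu : ‖u‖ ≤ ‖z‖ + ‖u - z‖ := norm_le_norm_add_norm_sub' u z
  have hz := norm_le_jap z
  refine Real.sqrt_le_iff.2 ⟨by linarith [jap_nonneg z, norm_nonneg (u - z)], ?_⟩
  nlinarith [jap_sq z, norm_nonneg u, norm_nonneg (u - z)]

lemma abs_jap_sub_mul_jap_le {p u z : E3} {t : ℝ} (ht₀ : 0 ≤ t) (ht₁ : t ≤ 1)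
    (h : ‖p - u‖ = t * ‖u - z‖) : |jap p - t * jap z| ≤ 2 * jap u := by
  have huz : ‖u - z‖ ≤ jap u + jap z :=
    (norm_sub_le u z).trans (add_le_add (norm_le_jap u) (norm_le_jap z))
  have hpu : ‖p - u‖ ≤ jap p + jap u :=
    (norm_sub_le p u).trans (add_le_add (norm_le_jap p) (norm_le_jap u))
  have hp := jap_le_jap_add_norm_sub p u
  have hz := jap_le_jap_add_norm_sub z u
  rw [norm_sub_rev] at hz
  rw [abs_le]
  constructor
  · nlinarith [mul_le_mul_of_nonneg_left hz ht₀]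
  · nlinarith [mul_le_mul_of_nonneg_left huz ht₀]

section Collision

variable (v w : E3) (σ : S2)

lemma cosTheta_mul_norm : cosTheta v w σ * ‖v - w‖ = ⟪v - w, (σ : E3)⟫ := by
  rcases eq_or_ne (v - w) 0 with h | h
  · simp [h]
  · rw [cosTheta, div_mul_cancel₀ _ (norm_ne_zero_iff.2 h)]

lemma abs_cosTheta_le_one : |cosTheta v w σ| ≤ 1 := by
  simpa [cosTheta, norm_eq_of_mem_sphere] using
    abs_real_inner_div_norm_mul_norm_le_one (v - w) (σ : E3)

lemma norm_vP_sub_left_sq : ‖vP v w σ - v‖ ^ 2 = (1 - cosTheta v w σ) / 2 * ‖v - w‖ ^ 2 := by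
  have h : vP v w σ - v = (2⁻¹ : ℝ) • (‖v - w‖ • (σ : E3) - (v - w)) := by
    rw [vP]; module
  rw [h, norm_smul, mul_pow, norm_sub_sq_real, norm_smul, real_inner_smul_left,
    norm_eq_of_mem_sphere, real_inner_comm, ← cosTheta_mul_norm]
  simp only [Real.norm_eq_abs, abs_norm]
  norm_num
  ring

lemma norm_vP_sub_right_sq : ‖vP v w σ - w‖ ^ 2 = (1 + cosTheta v w σ) / 2 * ‖v - w‖ ^ 2 := by
  have h : vP v w σ - w = (2⁻¹ : ℝ) • (‖v - w‖ • (σ : E3) + (v - w)) := by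
    rw [vP]; module
  rw [h, norm_smul, mul_pow, norm_add_sq_real, norm_smul, real_inner_smul_left,
    norm_eq_of_mem_sphere, real_inner_comm, ← cosTheta_mul_norm]
  simp only [Real.norm_eq_abs, abs_norm]
  norm_num
  ring

lemma norm_vP_sub_left : ‖vP v w σ - v‖ = sinHalf v w σ * ‖v - w‖ := by
  rw [sinHalf, ← Real.sqrt_sq (norm_nonneg _), norm_vP_sub_left_sq,
    Real.sqrt_mul' _ (sq_nonneg _), Real.sqrt_sq (norm_nonneg _)]

lemma norm_vP_sub_right : ‖vP v w σ - w‖ = cosHalf v w σ * ‖w - v‖ := by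
  rw [cosHalf, norm_sub_rev w, ← Real.sqrt_sq (norm_nonneg (vP v w σ - w)),
    norm_vP_sub_right_sq, Real.sqrt_mul' _ (sq_nonneg _), Real.sqrt_sq (norm_nonneg _)]

lemma sinHalf_le_one : sinHalf v w σ ≤ 1 :=
  Real.sqrt_le_one.2 (by linarith [(abs_le.1 (abs_cosTheta_le_one v w σ)).1])

lemma cosHalf_le_one : cosHalf v w σ ≤ 1 :=
  Real.sqrt_le_one.2 (by linarith [(abs_le.1 (abs_cosTheta_le_one v w σ)).2])

lemma abs_jap_vP_sub_sinHalf_mul_jap_le :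
    |jap (vP v w σ) - sinHalf v w σ * jap w| ≤ 2 * jap v :=
  abs_jap_sub_mul_jap_le (Real.sqrt_nonneg _) (sinHalf_le_one v w σ) (norm_vP_sub_left v w σ)

lemma abs_jap_vP_sub_cosHalf_mul_jap_le :
    |jap (vP v w σ) - cosHalf v w σ * jap v| ≤ 2 * jap w :=
  abs_jap_sub_mul_jap_le (Real.sqrt_nonneg _) (cosHalf_le_one v w σ) (norm_vP_sub_right v w σ)

end Collision

/-- expansion estimates for ⟨v'⟩^k. -/
theorem stmt3 (k : ℝ) (hk : 4 ≤ k) :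
    ∃ C : ℝ, 0 < C ∧ ∀ (v w : E3) (σ : S2),
      (|jap (vP v w σ) ^ k - sinHalf v w σ ^ k * jap w ^ k| ≤
          C * sinHalf v w σ ^ 2 * jap w ^ (k - 1) * jap v + C * jap v ^ k) ∧
      (|jap (vP v w σ) ^ k - cosHalf v w σ ^ k * jap v ^ k| ≤
          C * jap w ^ k * jap v ^ (k - 1)) := by
  refine ⟨k * 4 ^ k, by positivity, fun v w σ => ⟨?_, ?_⟩⟩
  · exact abs_rpow_sub_mul_rpow_le_sq_mul_add_rpow (by linarith) (Real.sqrt_nonneg _)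
      (sinHalf_le_one v w σ) (jap_nonneg v) (jap_nonneg w) (jap_nonneg _)
      (abs_jap_vP_sub_sinHalf_mul_jap_le v w σ)
  · exact abs_rpow_sub_mul_rpow_le_rpow_mul_rpow (by linarith) (Real.sqrt_nonneg _)
      (cosHalf_le_one v w σ) (one_le_jap v) (one_le_jap w) (jap_nonneg _)
      (abs_jap_vP_sub_cosHalf_mul_jap_le v w σ)

end
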